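/- Define T(r) = ∫_0^{rπ} log(tan θ) dθ. Let m = 2n+1 be an odd positive integer and suppose 0 ≤ r ≤ 1/(2m). Then T(mr) = m·∑_{j=0}^n T(j/m + r) - m·∑_{j=1}^n T(j/m - r). -/

import Mathlib

open Real
noncomputable def T (r : ℝ) : ℝ := ∫ θ in (0:ℝ)..(r * π), Real.log (Real.tan θ)

/-!
For odd `m = 2n+1`, the product formula `sin (m x) = 2^(m-1) ∏_{k<m} sin (x + kπ/m)` and its
shift by `π/2` give `tan (m x) = (-1)^n ∏_{k<m} tan (x + kπ/m)`. Taking logarithms (`Real.log`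
is `log |·|`, so the sign disappears) off the countably many zeros of `tan (m u)` and integrating
over `[0, rπ]` gives `T (m r) = m ∑_{k<m} (T (k/m + r) - T (k/m))`; here `log ∘ tan` is
integrable on every interval. Finally `log (tan (π - θ)) = log (tan θ)` gives
`T (1 - x) = T 1 - T x`, which turns the terms with `k = m - j`, `1 ≤ j ≤ n`, into
`T (j/m) - T (j/m - r)`.
-/

open Finset

theorem IsPrimitiveRoot.prod_one_sub_pow_mul {R : Type*} [CommRing R] [IsDomain R] {ζ : R}
    {m : ℕ} (hζ : IsPrimitiveRoot ζ m) (hm : m ≠ 0) (x : R) :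
    ∏ k ∈ range m, (1 - ζ ^ k * x) = 1 - x ^ m := by
  simpa [Polynomial.eval_prod] using
    (congrArg (Polynomial.eval 1) (X_pow_sub_C_eq_prod hζ (Nat.pos_of_ne_zero hm) rfl)).symm

namespace Complex

theorem two_mul_I_mul_sin (w : ℂ) : 2 * I * sin w = exp (w * I) - exp (-w * I) := by
  linear_combination I * two_sin w + (exp (-w * I) - exp (w * I)) * I_sq

theorem sin_nat_mul_eq_prod {m : ℕ} (hm : m ≠ 0) (z : ℂ) :
    sin (m * z) = 2 ^ (m - 1) * ∏ k ∈ range m, sin (z + k * π / m) := by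
  have hm' : (m : ℂ) ≠ 0 := Nat.cast_ne_zero.mpr hm
  set ζ := (exp (2 * π * I / m))⁻¹
  have hζ : IsPrimitiveRoot ζ m := (isPrimitiveRoot_exp _ hm).inv
  -- `2 I sin w = e^{iw} (1 - e^{-2iw})`, and `e^{-2iw}` runs over `ζ^k e^{-2iz}`
  have factor (k : ℕ) : 2 * I * sin (z + k * π / m) =
      exp ((z + k * π / m) * I) * (1 - ζ ^ k * exp (-2 * z * I)) := by
    rw [two_mul_I_mul_sin, mul_sub, mul_one, inv_pow, ← exp_nat_mul, ← exp_neg, ← exp_add,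
      ← exp_add]
    congr 2
    field_simp
    ring
  have gauss :
      ∑ k ∈ range m, (z + k * π / m) * I = m * z * I + (m - 1 : ℕ) * (π / 2 * I) := by
    have h := congrArg (Nat.cast : ℕ → ℂ) (sum_range_id_mul_two m)
    push_cast [Nat.one_le_iff_ne_zero.mpr hm] at h ⊢
    simp only [add_mul, div_eq_mul_inv, sum_add_distrib, ← sum_mul, sum_const, card_range,
      nsmul_eq_mul]
    field_simp
    linear_combination π * h
  have key :
      ∏ k ∈ range m, (2 * I * sin (z + k * π / m)) = I ^ (m - 1) * (2 * I * sin (m * z)) := by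
    rw [prod_congr rfl fun k _ => factor k, prod_mul_distrib, ← exp_sum, gauss,
      hζ.prod_one_sub_pow_mul hm, exp_add, exp_nat_mul, exp_pi_div_two_mul_I, two_mul_I_mul_sin,
      ← exp_nat_mul, mul_right_comm, mul_sub, mul_one, ← exp_add]
    ring_nf
  rw [prod_mul_distrib, prod_const, card_range] at key
  obtain ⟨p, rfl⟩ := Nat.exists_eq_add_one_of_ne_zero hm
  rw [Nat.add_sub_cancel] at key ⊢
  refine mul_left_cancel₀ (mul_ne_zero two_ne_zero (pow_ne_zero (p + 1) I_ne_zero)) ?_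
  linear_combination -key

end Complex

namespace Real

theorem sin_nat_mul_eq_prod {m : ℕ} (hm : m ≠ 0) (x : ℝ) :
    sin (m * x) = 2 ^ (m - 1) * ∏ k ∈ range m, sin (x + k * π / m) := by
  exact_mod_cast Complex.sin_nat_mul_eq_prod hm x

theorem cos_odd_mul_eq_prod (n : ℕ) (x : ℝ) :
    cos ((2 * n + 1) * x) =
      (-1) ^ n * 2 ^ (2 * n) * ∏ k ∈ range (2 * n + 1), cos (x + k * π / (2 * n + 1)) := by
  have h := sin_nat_mul_eq_prod (by omega : 2 * n + 1 ≠ 0) (x + π / 2)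
  push_cast at h
  rw [show (2 * n + 1) * (x + π / 2) = (2 * n + 1) * x + n * π + π / 2 by ring,
    sin_add_pi_div_two, cos_add_nat_mul_pi] at h
  simp only [add_right_comm x (π / 2), sin_add_pi_div_two] at h
  have hsq : ((-1 : ℝ) ^ n) ^ 2 = 1 := by rw [← pow_mul, (even_two.mul_left n).neg_one_pow]
  linear_combination (-1) ^ n * h - cos ((2 * n + 1) * x) * hsq

theorem tan_odd_mul_eq_prod (n : ℕ) (x : ℝ) :
    tan ((2 * n + 1) * x) =
      (-1) ^ n * ∏ k ∈ range (2 * n + 1), tan (x + k * π / (2 * n + 1)) := by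
  have h := sin_nat_mul_eq_prod (by omega : 2 * n + 1 ≠ 0) x
  push_cast at h
  simp only [tan_eq_sin_div_cos, prod_div_distrib]
  rw [h, cos_odd_mul_eq_prod, mul_comm ((-1 : ℝ) ^ n), mul_assoc,
    mul_div_mul_left _ _ (by positivity), div_eq_mul_inv, mul_inv, ← inv_pow, inv_neg_one]
  ring

theorem log_tan_odd_mul_eq_sum (n : ℕ) (x : ℝ) (h : tan ((2 * n + 1) * x) ≠ 0) :
    log (tan ((2 * n + 1) * x)) =
      ∑ k ∈ range (2 * n + 1), log (tan (x + k * π / (2 * n + 1))) := by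
  rw [tan_odd_mul_eq_prod] at h ⊢
  rw [log_mul (left_ne_zero_of_mul h) (right_ne_zero_of_mul h),
    log_prod fun k hk => prod_ne_zero_iff.mp (right_ne_zero_of_mul h) k hk]
  simp

-- Unconditional: where `sin x` or `cos x` vanishes, both sides are `0` as `log 0 = log (±1) = 0`.
theorem log_tan_eq_log_sin_sub_log_cos (x : ℝ) : log (tan x) = log (sin x) - log (cos x) := by
  by_cases hs : sin x = 0
  · have h := log_pow (cos x) 2
    rw [show cos x ^ 2 = 1 by nlinarith [sin_sq_add_cos_sq x], log_one, Nat.cast_ofNat] at h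
    rw [tan_eq_sin_div_cos, hs, zero_div, log_zero]
    linarith
  by_cases hc : cos x = 0
  · have h := log_pow (sin x) 2
    rw [show sin x ^ 2 = 1 by nlinarith [sin_sq_add_cos_sq x], log_one, Nat.cast_ofNat] at h
    rw [tan_eq_sin_div_cos, hc, div_zero, log_zero]
    linarith
  rw [tan_eq_sin_div_cos, log_div hs hc]

theorem intervalIntegrable_log_tan (a b : ℝ) :
    IntervalIntegrable (fun x => log (tan x)) MeasureTheory.volume a b := by
  simpa only [log_tan_eq_log_sin_sub_log_cos, Function.comp_apply] using
    intervalIntegrable_log_sin.sub intervalIntegrable_log_cos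

end Real

open MeasureTheory intervalIntegral

theorem T_sub_T_eq_integral (a b : ℝ) : T b - T a = ∫ θ in a * π..b * π, log (tan θ) :=
  integral_interval_sub_left (intervalIntegrable_log_tan _ _) (intervalIntegrable_log_tan _ _)

theorem T_one_sub (x : ℝ) : T (1 - x) = T 1 - T x := by
  have h : ∫ θ in 0..x * π, log (tan (π - θ)) = T 1 - T (1 - x) := by
    rw [integral_comp_sub_left (fun θ => log (tan θ)), T_sub_T_eq_integral]
    congr 1 <;> ring
  simp only [tan_pi_sub, log_neg_eq_log] at h
  change T x = _ at h
  linarith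

theorem T_mul_eq_mul_integral (c r : ℝ) :
    T (c * r) = c * ∫ u in 0..r * π, log (tan (c * u)) := by
  show T (c * r) = c • ∫ u in (0 : ℝ)..r * π, log (tan (c * u))
  rw [smul_integral_comp_mul_left (fun θ => log (tan θ)), mul_zero, T, mul_assoc]

theorem ae_tan_mul_ne_zero {c : ℝ} (hc : c ≠ 0) : ∀ᵐ u : ℝ, tan (c * u) ≠ 0 := by
  rw [ae_iff]
  push Not
  refine measure_mono_null ?_
    ((Set.countable_range fun k : ℤ => k * π / 2 / c).measure_zero volume)
  intro u hu
  obtain ⟨k, hk⟩ := tan_eq_zero_iff.mp hu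
  exact ⟨k, by field_simp; linarith⟩

theorem T_odd_mul_eq_sum (n : ℕ) (r : ℝ) :
    T ((2 * n + 1) * r) =
      (2 * n + 1) *
        ∑ k ∈ range (2 * n + 1), (T (k / (2 * n + 1) + r) - T (k / (2 * n + 1))) := by
  have shifted (d : ℝ) : IntervalIntegrable (fun u => log (tan (u + d))) volume 0 (r * π) := by
    simpa using (intervalIntegrable_log_tan d (r * π + d)).comp_add_right d
  rw [T_mul_eq_mul_integral]
  congr 1
  calc ∫ u in 0..r * π, log (tan ((2 * n + 1) * u))
      = ∫ u in 0..r * π, ∑ k ∈ range (2 * n + 1), log (tan (u + k * π / (2 * n + 1))) :=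
        integral_congr_ae ((ae_tan_mul_ne_zero (by positivity)).mono fun u hu _ =>
          log_tan_odd_mul_eq_sum n u hu)
    _ = ∑ k ∈ range (2 * n + 1), ∫ u in 0..r * π, log (tan (u + k * π / (2 * n + 1))) :=
        integral_finsetSum fun k _ => shifted _
    _ = _ := sum_congr rfl fun k _ => by
        rw [integral_comp_add_right (fun θ => log (tan θ)), T_sub_T_eq_integral]
        congr 1 <;> ring

theorem T_one_sub_add_sub_T_one_sub (x r : ℝ) :
    T (1 - x + r) - T (1 - x) = T x - T (x - r) := by
  rw [show 1 - x + r = 1 - (x - r) by ring, T_one_sub, T_one_sub]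
  ring

theorem Finset.sum_range_two_mul_add_one {M : Type*} [AddCommMonoid M] (f : ℕ → M) (n : ℕ) :
    ∑ k ∈ range (2 * n + 1), f k =
      ∑ k ∈ range (n + 1), f k + ∑ j ∈ Icc 1 n, f (2 * n + 1 - j) := by
  rw [← sum_range_add_sum_Ico _ (by omega : n + 1 ≤ 2 * n + 1), ← Ico_add_one_right_eq_Icc,
    sum_Ico_reflect _ _ (by omega), show 2 * n + 1 + 1 - (n + 1) = n + 1 by omega,
    Nat.add_sub_cancel]

theorem stmt7_general (n : ℕ) (r : ℝ) :
    T ((2 * n + 1) * r) =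
      (2 * n + 1) * (∑ j ∈ Finset.range (n + 1), T (j / (2 * n + 1) + r)) -
      (2 * n + 1) * (∑ j ∈ Finset.Icc 1 n, T (j / (2 * n + 1) - r)) := by
  have reflect : ∀ j ∈ Icc 1 n, T (((2 * n + 1 - j : ℕ) : ℝ) / (2 * n + 1) + r) -
      T (((2 * n + 1 - j : ℕ) : ℝ) / (2 * n + 1)) =
        T (j / (2 * n + 1)) - T (j / (2 * n + 1) - r) := by
    intro j hj
    have hjn : j ≤ 2 * n + 1 := by linarith [(mem_Icc.mp hj).2]
    rw [Nat.cast_sub hjn, ← T_one_sub_add_sub_T_one_sub]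
    congr 2 <;> field_simp <;> push_cast <;> ring
  have shift :
      ∑ j ∈ range (n + 1), T (j / (2 * n + 1)) = ∑ j ∈ Icc 1 n, T (j / (2 * n + 1)) := by
    rw [range_eq_Ico, sum_eq_sum_Ico_succ_bot (by omega : 0 < n + 1), zero_add,
      Ico_add_one_right_eq_Icc]
    simp [T]
  rw [T_odd_mul_eq_sum, sum_range_two_mul_add_one, sum_congr rfl reflect, sum_sub_distrib,
    sum_sub_distrib, shift]
  ring

theorem stmt7 (n : ℕ) (r : ℝ) (hr0 : 0 ≤ r) (hr1 : r ≤ 1 / (2 * (2 * n + 1))) :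
    T ((2 * n + 1) * r) =
      (2 * n + 1) * (∑ j ∈ Finset.range (n + 1), T (j / (2 * n + 1) + r)) -
      (2 * n + 1) * (∑ j ∈ Finset.Icc 1 n, T (j / (2 * n + 1) - r)) :=
  stmt7_general n r
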